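/- Let a, b, c be real numbers with c > 0, 1 + 2(a+b) ≠ 0 and 2(a+b+ab) − c + 1 ≠ 0. Set ρ₁ = (1 + 2(a+b+2ab))/(2[1 − c + 2(a+b+ab)]), ρ₂ = (1 + 2(a+b))/(2c), ρ₃ = 2c/(2(a+b+ab) − c + 1), and ω = 2ab/(1 + 2(a+b)). Then for every z ∈ (0,1) with ρ₂z < 1, the function z ↦ ρ₃ z^c (1−z)^(a+b+1−c) (1−ρ₂z)^(−ω) [ ₂F₁(a,b;c;z)/(1−ρ₂z) − ₂F₁(a+1,b+1;c+1;z) ] has derivative at z equal to z^c (1−z)^(a+b−c) (1−ρ₁z)(1−ρ₂z)^(−2−ω) ₂F₁(a,b;c;z). (Equivalently, ∫ z^c(1−z)^(a+b−c)(1−ρ₁z)(1−ρ₂z)^(−2−ω) ₂F₁(a,b;c;z)dz = ρ₃ z^c(1−z)^(a+b+1−c)(1−ρ₂z)^(−ω)[₂F₁(a,b;c;z)/(1−ρ₂z) − ₂F₁(a+1,b+1;c+1;z)] + c̃.) -/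

import Mathlib

/-!
Write the function as `ρ₃ w S` with `w t = t ^ c (1 - t) ^ (a + b + 1 - c) (1 - ρ₂ t) ^ (-ω)` and
`S = F / (1 - ρ₂ t) - G`, where `F = ₂F₁(a, b; c)` and `G = ₂F₁(a + 1, b + 1; c + 1)`. Its
derivative is `ρ₃ w ((log w)' S + S')`. Both `F' = (a b / c) G` and the contiguous relation
`z (1 - z) G' = c F - (c - (a + b + 1) z) G` (a comparison of power-series coefficients) express
`S'` through `F` and `G` alone, and the values of `ρ₁, ρ₂, ρ₃, ω` are exactly those for which the
coefficient of `G` vanishes, leaving `(1 - ρ₁ z) F`.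
-/

open Filter

section Coefficients

variable {𝕂 : Type*} [Field 𝕂] (a b c : 𝕂) (n : ℕ)

theorem ascPochhammer_succ_eval_left (x : 𝕂) :
    (ascPochhammer 𝕂 (n + 1)).eval x = x * (ascPochhammer 𝕂 n).eval (x + 1) := by
  simp [ascPochhammer_succ_left, Polynomial.eval_comp]

theorem ordinaryHypergeometricCoefficient_succ :
    ordinaryHypergeometricCoefficient a b c (n + 1) =
      ordinaryHypergeometricCoefficient a b c n * (a + n) * (b + n) * (c + n)⁻¹ *
        (n + 1 : 𝕂)⁻¹ := by
  simp only [ordinaryHypergeometricCoefficient, ascPochhammer_succ_eval, Nat.factorial_succ,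
    Nat.cast_mul, mul_inv, Nat.cast_succ]
  ring

@[simp]
theorem ordinaryHypergeometricCoefficient_zero : ordinaryHypergeometricCoefficient a b c 0 = 1 := by
  simp [ordinaryHypergeometricCoefficient]

variable [CharZero 𝕂]

theorem succ_mul_ordinaryHypergeometricCoefficient_succ :
    (n + 1) * ordinaryHypergeometricCoefficient a b c (n + 1) =
      a * b / c * ordinaryHypergeometricCoefficient (a + 1) (b + 1) (c + 1) n := by
  simp only [ordinaryHypergeometricCoefficient, ascPochhammer_succ_eval_left, Nat.factorial_succ,
    Nat.cast_mul, mul_inv, Nat.cast_succ]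
  field_simp

theorem ordinaryHypergeometricCoefficient_contiguous (hc : c ≠ 0) (hcn : c + 1 + n ≠ 0) :
    (c + 1 + n) * ordinaryHypergeometricCoefficient (a + 1) (b + 1) (c + 1) (n + 1) =
      c * ordinaryHypergeometricCoefficient a b c (n + 1) +
        (a + b + 1 + n) * ordinaryHypergeometricCoefficient (a + 1) (b + 1) (c + 1) n := by
  have hlink := succ_mul_ordinaryHypergeometricCoefficient_succ a b c n
  rw [ordinaryHypergeometricCoefficient_succ]
  generalize ordinaryHypergeometricCoefficient a b c (n + 1) = C at hlink ⊢
  generalize ordinaryHypergeometricCoefficient (a + 1) (b + 1) (c + 1) n = C' at hlink ⊢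
  field_simp at hlink ⊢
  linear_combination -hlink

end Coefficients

theorem FormalMultilinearSeries.hasDerivAt_sum {𝕜 F : Type*} [NontriviallyNormedField 𝕜]
    [NormedAddCommGroup F] [NormedSpace 𝕜 F] [CompleteSpace F]
    (p : FormalMultilinearSeries 𝕜 𝕜 F) {x : 𝕜} (hx : ‖x‖ₑ < p.radius) :
    HasDerivAt p.sum (∑' n, x ^ n • (n + 1) • p.coeff (n + 1)) x := by
  have hs : HasSum (fun n ↦ p.derivSeries n fun _ ↦ x) (p.derivSeries.sum x) :=
    p.derivSeries.hasSum (by simpa using hx.trans_le p.radius_le_radius_derivSeries)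
  refine (p.hasFDerivAt_sum hx).hasDerivAt.congr_deriv ?_
  refine ((hs.mapL (ContinuousLinearMap.apply 𝕜 F 1)).tsum_eq.symm.trans (tsum_congr fun n ↦ ?_))
  simp

section Analytic

variable {𝕂 : Type*} [RCLike 𝕂] (a b : 𝕂) {c : 𝕂}

theorem one_le_radius_ordinaryHypergeometricSeries (hc : ∀ k : ℕ, (k : 𝕂) ≠ -c) :
    1 ≤ (ordinaryHypergeometricSeries 𝕂 a b c).radius := by
  by_cases ha : ∃ k : ℕ, (k : 𝕂) = -a
  · obtain ⟨k, hk⟩ := ha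
    rw [show a = -(k : 𝕂) by rw [hk, neg_neg], ordinaryHypergeometric_radius_top_of_neg_nat₁]
    exact le_top
  by_cases hb : ∃ k : ℕ, (k : 𝕂) = -b
  · obtain ⟨k, hk⟩ := hb
    rw [show b = -(k : 𝕂) by rw [hk, neg_neg], ordinaryHypergeometric_radius_top_of_neg_nat₂]
    exact le_top
  push Not at ha hb
  rw [ordinaryHypergeometricSeries_radius_eq_one _ _ _ _ fun k ↦ ⟨ha k, hb k, hc k⟩]

theorem enorm_lt_radius_ordinaryHypergeometricSeries (hc : ∀ k : ℕ, (k : 𝕂) ≠ -c) {x : 𝕂}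
    (hx : ‖x‖ < 1) : ‖x‖ₑ < (ordinaryHypergeometricSeries 𝕂 a b c).radius :=
  lt_of_lt_of_le (by simpa [← ofReal_norm] using hx)
    (one_le_radius_ordinaryHypergeometricSeries a b hc)

theorem hasSum_ordinaryHypergeometric (hc : ∀ k : ℕ, (k : 𝕂) ≠ -c) {x : 𝕂} (hx : ‖x‖ < 1) :
    HasSum (fun n ↦ ordinaryHypergeometricCoefficient a b c n * x ^ n) (₂F₁ a b c x) := by
  have := (ordinaryHypergeometricSeries 𝕂 a b c).hasSum
    (Metric.mem_eball.mpr (by simpa using enorm_lt_radius_ordinaryHypergeometricSeries a b hc hx))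
  exact this.congr_fun fun n ↦ (ordinaryHypergeometricSeries_apply_eq a b c x n).symm

theorem hasDerivAt_ordinaryHypergeometric (hc : ∀ k : ℕ, (k : 𝕂) ≠ -c) {x : 𝕂} (hx : ‖x‖ < 1) :
    HasDerivAt (₂F₁ a b c) (a * b / c * ₂F₁ (a + 1) (b + 1) (c + 1) x) x := by
  refine ((ordinaryHypergeometricSeries 𝕂 a b c).hasDerivAt_sum
    (enorm_lt_radius_ordinaryHypergeometricSeries a b hc hx)).congr_deriv ?_
  rw [ordinaryHypergeometric_eq_tsum, ← tsum_mul_left]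
  refine tsum_congr fun n ↦ ?_
  simp only [ordinaryHypergeometricSeries, FormalMultilinearSeries.coeff_ofScalars, nsmul_eq_mul,
    smul_eq_mul, Nat.cast_add_one, succ_mul_ordinaryHypergeometricCoefficient_succ]
  ring

theorem natCast_ne_neg_add_one (hc : ∀ k : ℕ, (k : 𝕂) ≠ -c) (k : ℕ) : (k : 𝕂) ≠ -(c + 1) := by
  intro h
  apply hc (k + 1)
  push_cast
  linear_combination h

theorem ordinaryHypergeometric_contiguous (hc : ∀ k : ℕ, (k : 𝕂) ≠ -c) {x : 𝕂} (hx : ‖x‖ < 1) :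
    x * (1 - x) * ((a + 1) * (b + 1) / (c + 1) * ₂F₁ (a + 1 + 1) (b + 1 + 1) (c + 1 + 1) x) =
      c * ₂F₁ a b c x - (c - (a + b + 1) * x) * ₂F₁ (a + 1) (b + 1) (c + 1) x := by
  set C := ordinaryHypergeometricCoefficient a b c
  set C' := ordinaryHypergeometricCoefficient (a + 1) (b + 1) (c + 1)
  set D := (a + 1) * (b + 1) / (c + 1) * ₂F₁ (a + 1 + 1) (b + 1 + 1) (c + 1 + 1) x
  have hc' := natCast_ne_neg_add_one hc
  have hF := hasSum_ordinaryHypergeometric a b hc hx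
  have hG := hasSum_ordinaryHypergeometric (a + 1) (b + 1) hc' hx
  have hD : HasSum (fun n ↦ (n + 1) * C' (n + 1) * x ^ n) D := by
    refine ((hasSum_ordinaryHypergeometric _ _ (natCast_ne_neg_add_one hc') hx).mul_left
      ((a + 1) * (b + 1) / (c + 1))).congr_fun fun n ↦ ?_
    rw [succ_mul_ordinaryHypergeometricCoefficient_succ]
    ring
  have hF₁ : HasSum (fun n ↦ C (n + 1) * x ^ (n + 1)) (₂F₁ a b c x - 1) := by
    simpa using (hasSum_nat_add_iff' 1).mpr hF
  have hG₁ : HasSum (fun n ↦ C' (n + 1) * x ^ (n + 1)) (₂F₁ (a + 1) (b + 1) (c + 1) x - 1) := by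
    simpa using (hasSum_nat_add_iff' 1).mpr hG
  have hxD : HasSum (fun n ↦ (n + 1) * C' (n + 1) * x ^ (n + 1)) (x * D) :=
    (hD.mul_left x).congr_fun fun n ↦ by ring
  have hx2D : HasSum (fun n ↦ n * C' n * x ^ (n + 1)) (x ^ 2 * D) := by
    have := (hasSum_nat_add_iff (f := fun n ↦ (n : 𝕂) * C' n * x ^ (n + 1)) 1).mp
      ((hD.mul_left (x ^ 2)).congr_fun fun n ↦ ?_)
    · simpa using this
    · push_cast; ring
  -- compare the coefficients of `x ^ (n + 1)`; the constant terms are `c - c = 0`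
  have hlhs := hxD.sub hx2D
  have hrhs := ((hF₁.mul_left c).sub (hG₁.mul_left c)).add ((hG.mul_left x).mul_left (a + b + 1))
  have hcoeff (n : ℕ) : (n + 1) * C' (n + 1) * x ^ (n + 1) - n * C' n * x ^ (n + 1) =
      c * (C (n + 1) * x ^ (n + 1)) - c * (C' (n + 1) * x ^ (n + 1)) +
        (a + b + 1) * (x * (C' n * x ^ n)) := by
    have hc0 : c ≠ 0 := by simpa [eq_comm] using hc 0
    have hcn : c + 1 + n ≠ 0 := fun h ↦ hc (n + 1) (by push_cast; linear_combination h)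
    linear_combination x ^ (n + 1) * ordinaryHypergeometricCoefficient_contiguous a b c n hc0 hcn
  have := hlhs.unique (hrhs.congr_fun fun n ↦ hcoeff n)
  linear_combination this

theorem hasDerivAt_ordinaryHypergeometric_add_one (hc : ∀ k : ℕ, (k : 𝕂) ≠ -c) {x : 𝕂}
    (hx : ‖x‖ < 1) (hx₀ : x ≠ 0) :
    HasDerivAt (₂F₁ (a + 1) (b + 1) (c + 1))
      ((c * ₂F₁ a b c x - (c - (a + b + 1) * x) * ₂F₁ (a + 1) (b + 1) (c + 1) x) / (x * (1 - x)))
      x := by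
  have hx₁ : 1 - x ≠ 0 := fun h ↦ by simp [← sub_eq_zero.mp h] at hx
  refine (hasDerivAt_ordinaryHypergeometric _ _ (natCast_ne_neg_add_one hc) hx).congr_deriv ?_
  rw [← ordinaryHypergeometric_contiguous a b hc hx]
  field_simp

end Analytic

theorem hasDerivAt_rpow_mul_rpow_mul_rpow (p q r s : ℝ) {z : ℝ} (hz₀ : z ≠ 0) (hz₁ : 1 - z ≠ 0)
    (hsz : 1 - s * z ≠ 0) :
    HasDerivAt (fun t ↦ t ^ p * (1 - t) ^ q * (1 - s * t) ^ r)
      (z ^ p * (1 - z) ^ q * (1 - s * z) ^ r * (p / z - q / (1 - z) - r * s / (1 - s * z))) z := by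
  have hP := Real.hasDerivAt_rpow_const (p := p) (Or.inl hz₀)
  have hQ := (Real.hasDerivAt_rpow_const (p := q) (Or.inl hz₁)).comp z
    ((hasDerivAt_id z).const_sub 1)
  have hR := (Real.hasDerivAt_rpow_const (p := r) (Or.inl hsz)).comp z
    (((hasDerivAt_id z).const_mul s).const_sub 1)
  refine ((hP.mul hQ).mul hR).congr_deriv ?_
  simp only [Real.rpow_sub_one hz₀, Real.rpow_sub_one hz₁, Real.rpow_sub_one hsz, id,
    Function.comp_apply, Pi.mul_apply]
  field_simp
  ring

/-- The bracket is `(log w)' S + S'`, with `F'` and `G'` expressed through `F` and `G`. -/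
theorem hypergeometric_integrand_identity {a b c ρ₁ ρ₂ ρ₃ ω z : ℝ} (F G : ℝ) (hc : c ≠ 0)
    (hab : 1 + 2 * (a + b) ≠ 0) (habc : 2 * (a + b + a * b) - c + 1 ≠ 0)
    (hρ₁ : ρ₁ = (1 + 2 * (a + b + 2 * a * b)) / (2 * (1 - c + 2 * (a + b + a * b))))
    (hρ₂ : ρ₂ = (1 + 2 * (a + b)) / (2 * c))
    (hρ₃ : ρ₃ = 2 * c / (2 * (a + b + a * b) - c + 1))
    (hω : ω = 2 * a * b / (1 + 2 * (a + b)))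
    (hz₀ : z ≠ 0) (hz₁ : 1 - z ≠ 0) (hq : 1 - ρ₂ * z ≠ 0) :
    ρ₃ * (1 - z) * (1 - ρ₂ * z) ^ 2 *
      ((c / z - (a + b + 1 - c) / (1 - z) - -ω * ρ₂ / (1 - ρ₂ * z)) * (F / (1 - ρ₂ * z) - G) +
        ((a * b / c * G * (1 - ρ₂ * z) - F * -ρ₂) / (1 - ρ₂ * z) ^ 2 -
          (c * F - (c - (a + b + 1) * z) * G) / (z * (1 - z)))) =
      (1 - ρ₁ * z) * F := by
  have hd : 1 - c + 2 * (a + b + a * b) ≠ 0 := fun h ↦ habc (by linarith)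
  have hK : 2 * c - (1 + 2 * (a + b)) * z ≠ 0 := by
    rw [hρ₂] at hq
    contrapose! hq
    field_simp
    linear_combination hq
  have hK' : 2 * c - z * (1 + 2 * (a + b)) ≠ 0 := by rwa [mul_comm z]
  clear hq
  subst hρ₁ hρ₂ hρ₃ hω
  field_simp
  ring

/-- New indefinite integral for the Gauss hypergeometric function: with
`ρ₁ = (1+2(a+b+2ab))/(2[1-c+2(a+b+ab)])`, `ρ₂ = (1+2(a+b))/(2c)`,
`ρ₃ = 2c/(2(a+b+ab)-c+1)`, `ω = 2ab/(1+2(a+b))`, for `c > 0` and every `z ∈ (0,1)`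
with `ρ₂ z < 1`, the function
`z ↦ ρ₃ z^c (1-z)^(a+b+1-c) (1-ρ₂z)^(-ω) [₂F₁(a,b;c;z)/(1-ρ₂z) - ₂F₁(a+1,b+1;c+1;z)]`
has derivative `z^c (1-z)^(a+b-c) (1-ρ₁z)(1-ρ₂z)^(-2-ω) ₂F₁(a,b;c;z)` at `z`. -/
theorem hypergeometric_integral_rho
    (a b c ρ₁ ρ₂ ρ₃ ω : ℝ) (hc : 0 < c)
    (hab : 1 + 2 * (a + b) ≠ 0) (habc : 2 * (a + b + a * b) - c + 1 ≠ 0)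
    (hρ₁ : ρ₁ = (1 + 2 * (a + b + 2 * a * b)) / (2 * (1 - c + 2 * (a + b + a * b))))
    (hρ₂ : ρ₂ = (1 + 2 * (a + b)) / (2 * c))
    (hρ₃ : ρ₃ = 2 * c / (2 * (a + b + a * b) - c + 1))
    (hω : ω = 2 * a * b / (1 + 2 * (a + b))) :
    ∀ z ∈ Set.Ioo (0 : ℝ) 1, ρ₂ * z < 1 →
      HasDerivAt
        (fun t => ρ₃ * t ^ c * (1 - t) ^ (a + b + 1 - c) * (1 - ρ₂ * t) ^ (-ω)
          * (₂F₁ a b c t / (1 - ρ₂ * t) - ₂F₁ (a + 1) (b + 1) (c + 1) t))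
        (z ^ c * (1 - z) ^ (a + b - c) * (1 - ρ₁ * z) * (1 - ρ₂ * z) ^ (-2 - ω)
          * ₂F₁ a b c z) z := by
  intro z ⟨hz₀, hz₁⟩ hρz
  have hc' : ∀ k : ℕ, (k : ℝ) ≠ -c := fun k h ↦ by linarith [(k.cast_nonneg : (0 : ℝ) ≤ k)]
  have hz : ‖z‖ < 1 := by rwa [Real.norm_of_nonneg hz₀.le]
  have hz₁' : 1 - z ≠ 0 := by linarith
  have hq : 0 < 1 - ρ₂ * z := by linarith
  have hS := ((hasDerivAt_ordinaryHypergeometric a b hc' hz).div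
    (((hasDerivAt_id z).const_mul ρ₂).const_sub 1) hq.ne').sub
    (hasDerivAt_ordinaryHypergeometric_add_one a b hc' hz hz₀.ne')
  have hw := hasDerivAt_rpow_mul_rpow_mul_rpow c (a + b + 1 - c) (-ω) ρ₂ hz₀.ne' hz₁' hq.ne'
  refine (((hw.mul hS).const_mul ρ₃).congr_of_eventuallyEq
    (Eventually.of_forall fun t ↦ ?_)).congr_deriv ?_
  · simp only [Pi.mul_apply, Pi.sub_apply, Pi.div_apply, id]
    ring
  · have e₁ : (1 - z) ^ (a + b + 1 - c) = (1 - z) ^ (a + b - c) * (1 - z) := by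
      rw [add_sub_right_comm, Real.rpow_add_one hz₁']
    have e₂ : (1 - ρ₂ * z) ^ (-ω) = (1 - ρ₂ * z) ^ (-2 - ω) * (1 - ρ₂ * z) ^ 2 := by
      rw [← Real.rpow_natCast, ← Real.rpow_add hq]
      ring_nf
    have key := hypergeometric_integrand_identity (₂F₁ a b c z) (₂F₁ (a + 1) (b + 1) (c + 1) z)
      hc.ne' hab habc hρ₁ hρ₂ hρ₃ hω hz₀.ne' hz₁' hq.ne'
    simp only [e₁, e₂, id, Pi.sub_apply, Pi.div_apply]
    generalize z ^ c = X, (1 - z) ^ (a + b - c) = Y, (1 - ρ₂ * z) ^ (-2 - ω) = W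
    linear_combination X * Y * W * key
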